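/- All three quadrisecants of a hexagonal trefoil knot are alternating. -/

import Mathlib

noncomputable section

/-- Points of ℝ³. -/
abbrev E3 : Type := Fin 3 → ℝ

/-- A line in ℝ³: the affine span of two distinct points, viewed as a set. -/
def IsLine (L : Set E3) : Prop :=
  ∃ p q : E3, p ≠ q ∧ L = (affineSpan ℝ ({p, q} : Set E3) : Set E3)

/-- A plane: an affine subspace of dimension 2. -/
def IsPlane (P : AffineSubspace ℝ E3) : Prop :=
  Module.finrank ℝ P.direction = 2

/-- A (combinatorial) hexagon: six vertices in ℝ³, joined cyclically.
Paper vertex `v_i` corresponds to `v (i-1)`, paper edge `e_{i,i+1}` to `edge (i-1)`,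
paper disk `Δ_i` to `disk (i-1)`, paper plane `P_i` to `P (i-1)`. -/
structure Hexagon where
  v : Fin 6 → E3

namespace Hexagon

variable (H : Hexagon)

/-- The closed edge from `v i` to `v (i+1)`. -/
def edge (i : Fin 6) : Set E3 := segment ℝ (H.v i) (H.v (i + 1))

/-- The open edge (interior of the edge) from `v i` to `v (i+1)`. -/
def intEdge (i : Fin 6) : Set E3 := openSegment ℝ (H.v i) (H.v (i + 1))

/-- The hexagonal closed polygonal curve: union of the six edges. -/
def K : Set E3 := ⋃ i, H.edge i

/-- The triangular disk with vertices `v (i-1)`, `v i`, `v (i+1)`. -/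
def disk (i : Fin 6) : Set E3 := convexHull ℝ ({H.v (i - 1), H.v i, H.v (i + 1)} : Set E3)

/-- The plane through `v (i-1)`, `v i`, `v (i+1)`. -/
def P (i : Fin 6) : AffineSubspace ℝ E3 :=
  affineSpan ℝ ({H.v (i - 1), H.v i, H.v (i + 1)} : Set E3)

/-- General position: no three vertices collinear, no four vertices coplanar. -/
def GeneralPosition : Prop :=
  (∀ i j k : Fin 6, i ≠ j → i ≠ k → j ≠ k →
    ¬ Collinear ℝ ({H.v i, H.v j, H.v k} : Set E3)) ∧
  (∀ i j k l : Fin 6, i ≠ j → i ≠ k → i ≠ l → j ≠ k → j ≠ l → k ≠ l →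
    ¬ Coplanar ℝ ({H.v i, H.v j, H.v k, H.v l} : Set E3))

/-- The Huh–Jeon intersection pattern: the only nonempty intersections of open edges with
interiors of triangular disks are `int e23 ∩ int Δ5`, `int e23 ∩ int Δ6`, `int e45 ∩ int Δ1`,
`int e45 ∩ int Δ2`, `int e61 ∩ int Δ3`, `int e61 ∩ int Δ4` (in the paper's labels). -/
def HuhJeon : Prop :=
  ∀ i j : Fin 6, (H.intEdge i ∩ intrinsicInterior ℝ (H.disk j)).Nonempty ↔
    (i, j) ∈ ({(1, 4), (1, 5), (3, 0), (3, 1), (5, 2), (5, 3)} : Set (Fin 6 × Fin 6))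

/-- The candidate quadrisecant line `L_{k+1}` of the paper: the intersection of the planes
`P (k+1)` and `P (k+4)` (for `k = 0, 1, 2`).  `QLine 0` is the paper's `L₁ = P₂ ∩ P₅`,
`QLine 1` is `L₂ = P₃ ∩ P₆`, and `QLine 2` is `L₃ = P₄ ∩ P₁`. -/
def QLine (k : Fin 6) : Set E3 := (H.P (k + 1) : Set E3) ∩ (H.P (k + 4) : Set E3)

end Hexagon

/-- `L` is a quadrisecant of the curve `K`: a line meeting `K` in at least four points. -/
def IsQuadrisecantOf (K L : Set E3) : Prop :=
  IsLine L ∧ ∃ S : Finset E3, S.card = 4 ∧ (S : Set E3) ⊆ K ∩ L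

/-- A quadrisecant of the hexagonal knot `H`. -/
def Hexagon.IsQuadrisecant (H : Hexagon) (L : Set E3) : Prop :=
  IsQuadrisecantOf H.K L

/-- A standard parametrization of the trefoil knot. -/
def trefoilCurve (t : ℝ) : E3 :=
  ![Real.sin t + 2 * Real.sin (2 * t), Real.cos t - 2 * Real.cos (2 * t), - Real.sin (3 * t)]

/-- The standard trefoil knot as a subset of ℝ³. -/
def TrefoilSet : Set E3 := Set.range trefoilCurve

/-- The standard planar round circle (the unknot). -/
def UnknotSet : Set E3 := {x : E3 | x 0 ^ 2 + x 1 ^ 2 = 1 ∧ x 2 = 0}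

/-- Two subsets of ℝ³ are equivalent as knots if there is an ambient isotopy of ℝ³
carrying one onto the other. -/
def KnotEquiv (K₁ K₂ : Set E3) : Prop :=
  ∃ F : ℝ → (E3 ≃ₜ E3), Continuous (fun p : ℝ × E3 => F p.1 p.2) ∧
    F 0 = Homeomorph.refl E3 ∧ (F 1) '' K₁ = K₂

/-- `K` has the knot type of the trefoil. -/
def IsTrefoil (K : Set E3) : Prop := KnotEquiv K TrefoilSet

/-- `K` is an unknot: it has the knot type of a planar circle. -/
def IsUnknot (K : Set E3) : Prop := KnotEquiv K UnknotSet

/-- The closed polygonal curve with vertices `v 0, …, v (n-1)` joined cyclically. -/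
def polyCurve (n : ℕ) [NeZero n] (v : Fin n → E3) : Set E3 :=
  ⋃ i, segment ℝ (v i) (v (i + 1))

/-- `v` determines an embedded (simple) closed polygonal curve: distinct vertices,
adjacent edges meet exactly at their common vertex, non-adjacent edges are disjoint. -/
def IsSimplePolygon (n : ℕ) [NeZero n] (v : Fin n → E3) : Prop :=
  3 ≤ n ∧ Function.Injective v ∧
  (∀ i : Fin n,
    segment ℝ (v i) (v (i + 1)) ∩ segment ℝ (v (i + 1)) (v (i + 2)) = {v (i + 1)}) ∧
  (∀ i j : Fin n, j ≠ i → j ≠ i + 1 → j + 1 ≠ i →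
    segment ℝ (v i) (v (i + 1)) ∩ segment ℝ (v j) (v (j + 1)) = ∅)

namespace Hexagon

/-- The quadrisecant approximation determined by marked points `c i`, `d i` on edge `i`:
`O i = [c i, d i]` (straightened part of edge `i`) and `N i = [d (i-1), c i]`
(the segment cutting the corner at `v i`). -/
def QA (H : Hexagon) (c d : Fin 6 → E3) : Set E3 :=
  (⋃ i, segment ℝ (c i) (d i)) ∪ (⋃ i, segment ℝ (d (i - 1)) (c i))

/-- `c i`, `d i` are exactly the quadrisecant points on edge `i`, occurring in the
order `v i, c i, d i, v (i+1)` along the edge. -/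
def QAData (H : Hexagon) (c d : Fin 6 → E3) : Prop :=
  ∀ i : Fin 6,
    ({c i, d i} : Set E3) = H.edge i ∩ (H.QLine 0 ∪ H.QLine 1 ∪ H.QLine 2) ∧
    Sbtw ℝ (H.v i) (c i) (d i) ∧ Sbtw ℝ (c i) (d i) (H.v (i + 1))

end Hexagon

/-!
Let the quadrisecant `L` meet `edge i`, `edge (i + 1)`, `edge (i + 3)`, `edge (i + 4)` at
`a, q, p, b`. General position forces `a ≠ q` and `p ≠ b`: otherwise `L` passes through a vertex
lying off the plane of the opposite pair of edges, or meets the hexagon only in two opposite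
vertices. Hence `L` lies in both planes `P (i + 1)` and `P (i + 4)`.

In the Huh–Jeon pattern the open edge `i + 1` pierces the relative interior of the triangle
`disk (i + 4)`; as that edge meets the plane of the triangle only once, the piercing point is `q`.
The points `b` and `p` lie on sides of the same triangle, outside its relative interior. If `q`
were not strictly between `b` and `p`, one of them would lie on the open segment from the other
to `q`, hence in the relative interior. In the same way `p` is a relative interior point of
`disk (i + 1)`, whose sides carry `a` and `q`.
-/

open Set

section Affine

variable {k V P : Type*} [Field k] [AddCommGroup V] [Module k V] [AddTorsor V P]

theorem subsingleton_affineSpan_pair_inter {S : AffineSubspace k P} {u v : P} (hu : u ∉ S) :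
    ((line[k, u, v] : Set P) ∩ S).Subsingleton := by
  rintro x ⟨hx, hxS⟩ y ⟨hy, hyS⟩
  by_contra hxy
  have hcol : Collinear k ({x, y, u, v} : Set P) :=
    collinear_insert_insert_of_mem_affineSpan_pair hx hy
  exact hu (affineSpan_le.2 (pair_subset hxS hyS)
    (hcol.mem_affineSpan_of_mem_of_ne (by simp) (by simp) (by simp) hxy))

theorem Collinear.subset_of_mem_affineSubspace {s : Set P} (h : Collinear k s)
    {S : AffineSubspace k P} {x y : P} (hx : x ∈ s) (hy : y ∈ s) (hxy : x ≠ y) (hxS : x ∈ S)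
    (hyS : y ∈ S) : s ⊆ S := fun _ hz =>
  affineSpan_le.2 (pair_subset hxS hyS)
    (h.affineSpan_eq_of_ne hx hy hxy ▸ subset_affineSpan k s hz)

end Affine

section IntrinsicInterior

variable {V : Type*} [AddCommGroup V] [Module ℝ V] [TopologicalSpace V]

theorem mem_intrinsicInterior_iff_exists_isOpen {s : Set V} {x : V} :
    x ∈ intrinsicInterior ℝ s ↔
      x ∈ affineSpan ℝ s ∧
        ∃ U : Set V, IsOpen U ∧ x ∈ U ∧ (affineSpan ℝ s : Set V) ∩ U ⊆ s := by
  constructor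
  · rintro ⟨y, hy, rfl⟩
    obtain ⟨t, hts, ht, hyt⟩ := mem_interior.1 hy
    obtain ⟨U, hU, rfl⟩ := isOpen_induced_iff.1 ht
    exact ⟨y.2, U, hU, hyt, fun w ⟨hwA, hwU⟩ =>
      hts (show (⟨w, hwA⟩ : affineSpan ℝ s) ∈ _ from hwU)⟩
  · rintro ⟨hx, U, hU, hxU, hUs⟩
    exact ⟨⟨x, hx⟩, mem_interior.2 ⟨_, fun w hw => hUs ⟨w.2, hw⟩,
      hU.preimage continuous_subtype_val, hxU⟩, rfl⟩

variable [IsTopologicalAddGroup V] [ContinuousSMul ℝ V]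

theorem Convex.openSegment_subset_intrinsicInterior {s : Set V} (hs : Convex ℝ s) {x y : V}
    (hx : x ∈ s) (hy : y ∈ intrinsicInterior ℝ s) :
    openSegment ℝ x y ⊆ intrinsicInterior ℝ s := by
  rw [openSegment_eq_image_lineMap]
  rintro _ ⟨t, ⟨ht₀, ht₁⟩, rfl⟩
  obtain ⟨hyA, U, hU, hyU, hUs⟩ := mem_intrinsicInterior_iff_exists_isOpen.1 hy
  have hxA : x ∈ affineSpan ℝ s := subset_affineSpan ℝ s hx
  -- the homothety with centre `x` and ratio `t` carries `y` to the point and `s` into `s`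
  refine mem_intrinsicInterior_iff_exists_isOpen.2 ⟨AffineMap.lineMap_mem t hxA hyA,
    AffineMap.homothety x t '' U, AffineMap.homothety_isOpenMap x t ht₀.ne' U hU,
    ⟨y, hyU, AffineMap.homothety_eq_lineMap x t y⟩, ?_⟩
  rintro _ ⟨hwA, u, huU, rfl⟩
  have huA : u ∈ affineSpan ℝ s := by
    convert (affineSpan ℝ s).smul_vsub_vadd_mem t⁻¹ hwA hxA hxA using 1
    simp [AffineMap.homothety_apply, smul_smul, inv_mul_cancel₀ ht₀.ne']
  rw [AffineMap.homothety_eq_lineMap]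
  exact hs.lineMap_mem hx (hUs ⟨huA, huU⟩) ⟨ht₀.le, ht₁.le⟩

theorem Convex.sbtw_of_mem_intrinsicInterior {s : Set V} (hs : Convex ℝ s) {x y z : V}
    (hcol : Collinear ℝ ({x, y, z} : Set V)) (hx : x ∈ s \ intrinsicInterior ℝ s)
    (hy : y ∈ intrinsicInterior ℝ s) (hz : z ∈ s \ intrinsicInterior ℝ s) (hxz : x ≠ z) :
    Sbtw ℝ x y z := by
  have hyx : y ≠ x := fun h => hx.2 (h ▸ hy)
  have hyz : y ≠ z := fun h => hz.2 (h ▸ hy)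
  rcases hcol.wbtw_or_wbtw_or_wbtw with h | h | h
  · exact ⟨h, hyx, hyz⟩
  · refine absurd (hs.openSegment_subset_intrinsicInterior hx.1 hy ?_) hz.2
    rw [openSegment_symm]
    exact mem_openSegment_of_ne_left_right hyz hxz h.mem_segment
  · exact absurd (hs.openSegment_subset_intrinsicInterior hz.1 hy
      (mem_openSegment_of_ne_left_right hxz.symm hyx h.mem_segment)) hx.2

end IntrinsicInterior

theorem IsLine.collinear {L : Set E3} (h : IsLine L) : Collinear ℝ L := by
  obtain ⟨p, q, -, rfl⟩ := h
  have hpq := collinear_pair ℝ p q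
  rwa [Collinear, ← AffineSubspace.direction_eq_vectorSpan, direction_affineSpan]

theorem IsQuadrisecantOf.not_inter_subset_pair {K L : Set E3} (h : IsQuadrisecantOf K L)
    (x y : E3) : ¬ K ∩ L ⊆ {x, y} := fun hxy => by
  obtain ⟨-, S, hS, hSKL⟩ := h
  have hSxy : S ⊆ {x, y} := by
    rw [← Finset.coe_subset, Finset.coe_pair]
    exact hSKL.trans hxy
  have := (Finset.card_le_card hSxy).trans Finset.card_le_two
  omega

namespace Hexagon

variable (H : Hexagon) {j k m : Fin 6}

theorem v_mem_P (h : j = k - 1 ∨ j = k ∨ j = k + 1) : H.v j ∈ H.P k :=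
  subset_affineSpan ℝ _ (by rcases h with rfl | rfl | rfl <;> simp)

theorem disk_subset_P : H.disk k ⊆ H.P k := convexHull_subset_affineSpan _

theorem edge_subset_disk (h : j = k - 1 ∨ j = k) : H.edge j ⊆ H.disk k :=
  (convex_convexHull ℝ _).segment_subset
    (subset_convexHull ℝ _ (by rcases h with rfl | rfl <;> simp))
    (subset_convexHull ℝ _ (by rcases h with rfl | rfl <;> simp))

theorem edge_subset_P (h : j = k - 1 ∨ j = k) : H.edge j ⊆ H.P k :=
  (H.edge_subset_disk h).trans H.disk_subset_P

theorem mem_intrinsicInterior_disk_of_nonempty {z : E3}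
    (hcross : (H.intEdge j ∩ intrinsicInterior ℝ (H.disk k)).Nonempty) (hj : H.v j ∉ H.P k)
    (hz : z ∈ H.edge j) (hzP : z ∈ H.P k) : z ∈ intrinsicInterior ℝ (H.disk k) := by
  obtain ⟨w, hw, hwD⟩ := hcross
  have hwz : w = z := subsingleton_affineSpan_pair_inter hj
    ⟨(mem_segment_iff_wbtw.1 (openSegment_subset_segment ℝ _ _ hw)).mem_affineSpan,
      H.disk_subset_P (intrinsicInterior_subset hwD)⟩
    ⟨(mem_segment_iff_wbtw.1 hz).mem_affineSpan, hzP⟩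
  exact hwz ▸ hwD

variable {H}

theorem GeneralPosition.v_notMem_P (hgp : H.GeneralPosition)
    (h : j ≠ k - 1 ∧ j ≠ k ∧ j ≠ k + 1) : H.v j ∉ H.P k := fun hj =>
  hgp.2 j (k - 1) k (k + 1) h.1 h.2.1 h.2.2 (by omega) (by omega) (by omega)
    ((coplanar_insert_iff_of_mem_affineSpan hj).2 (coplanar_triple ℝ _ _ _))

theorem GeneralPosition.eq_v_of_mem_edge_of_mem_edge (hgp : H.GeneralPosition) {x : E3}
    (hj : x ∈ H.edge j) (hk : x ∈ H.edge k) (hjk : k = j + 1) : x = H.v k := by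
  subst hjk
  exact subsingleton_affineSpan_pair_inter (hgp.v_notMem_P (k := j + 2) (by omega))
    ⟨(mem_segment_iff_wbtw.1 hj).mem_affineSpan, H.edge_subset_P (by omega) hk⟩
    ⟨right_mem_affineSpan_pair ℝ _ _, H.v_mem_P (by omega)⟩

theorem GeneralPosition.K_inter_subset_pair (hgp : H.GeneralPosition) {L : Set E3}
    (hL : Collinear ℝ L) (hj : H.v j ∈ L) (hj' : H.v (j + 3) ∈ L) :
    H.K ∩ L ⊆ {H.v j, H.v (j + 3)} := by
  rintro x ⟨hxK, hxL⟩
  obtain ⟨k, hxk⟩ := mem_iUnion.1 hxK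
  have hxP : x ∈ H.P k := H.edge_subset_P (Or.inr rfl) hxk
  have hne : H.v j ≠ H.v (j + 3) := fun h =>
    hgp.v_notMem_P (j := j + 3) (k := j) (by omega) (h ▸ H.v_mem_P (by omega))
  -- three consecutive vertices contain exactly one of two opposite ones
  rcases (by omega : (j = k - 1 ∨ j = k ∨ j = k + 1) ∨
      (j + 3 = k - 1 ∨ j + 3 = k ∨ j + 3 = k + 1)) with h | h
  · left
    exact subsingleton_affineSpan_pair_inter (hgp.v_notMem_P (j := j + 3) (by omega))
      ⟨hL.mem_affineSpan_of_mem_of_ne hj' hj hxL hne.symm, hxP⟩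
      ⟨right_mem_affineSpan_pair ℝ _ _, H.v_mem_P h⟩
  · right
    exact subsingleton_affineSpan_pair_inter (hgp.v_notMem_P (j := j) (by omega))
      ⟨hL.mem_affineSpan_of_mem_of_ne hj hj' hxL hne, hxP⟩
      ⟨right_mem_affineSpan_pair ℝ _ _, H.v_mem_P h⟩

theorem GeneralPosition.v_notMem_of_isQuadrisecant (hgp : H.GeneralPosition) {L : Set E3}
    (hL : H.IsQuadrisecant L) {p b : E3} (hp : p ∈ H.edge k ∩ L) (hb : b ∈ H.edge m ∩ L)
    (hk : k = j + 2) (hm : m = j + 3) : H.v j ∉ L := by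
  intro hj
  by_cases hpb : p = b
  · subst hpb
    have hpv : p = H.v (j + 3) := hm ▸ hgp.eq_v_of_mem_edge_of_mem_edge hp.1 hb.1 (by omega)
    exact hL.not_inter_subset_pair _ _
      (hgp.K_inter_subset_pair hL.1.collinear hj (hpv ▸ hp.2))
  · exact hgp.v_notMem_P (j := j) (k := m) (by omega)
      (hL.1.collinear.subset_of_mem_affineSubspace hp.2 hb.2 hpb
        (H.edge_subset_P (by omega) hp.1) (H.edge_subset_P (by omega) hb.1) hj)

theorem HuhJeon.disjoint_intEdge_side (hhj : H.HuhJeon) (h : j = k - 1 ∨ j = k) :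
    Disjoint (H.intEdge j) (intrinsicInterior ℝ (H.disk k)) := by
  rw [disjoint_iff_inter_eq_empty, ← not_nonempty_iff_eq_empty]
  intro hne
  have := (hhj j k).1 hne
  simp only [mem_insert_iff, mem_singleton_iff, Prod.mk.injEq] at this
  omega

theorem HuhJeon.nonempty_intEdge_inter {i : Fin 6} (hhj : H.HuhJeon)
    (hi : i ∈ ({0, 2, 4} : Set (Fin 6))) :
    (H.intEdge (i + 1) ∩ intrinsicInterior ℝ (H.disk (i + 4))).Nonempty ∧
      (H.intEdge (i + 3) ∩ intrinsicInterior ℝ (H.disk (i + 1))).Nonempty := by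
  simp only [mem_insert_iff, mem_singleton_iff] at hi
  refine ⟨(hhj _ _).2 ?_, (hhj _ _).2 ?_⟩ <;>
    rcases hi with rfl | rfl | rfl <;> simp

theorem GeneralPosition.mem_disk_diff_intrinsicInterior (hgp : H.GeneralPosition)
    (hhj : H.HuhJeon) {n : Fin 6} {x : E3} (hjk : j = k - 1 ∨ j = k)
    (hn : n = j + 3 ∨ n = j + 4) (hx : x ∈ H.edge j) (hxP : x ∈ H.P n) :
    x ∈ H.disk k \ intrinsicInterior ℝ (H.disk k) := by
  have hxj : x ∈ H.intEdge j := mem_openSegment_of_ne_left_right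
    (fun h => hgp.v_notMem_P (j := j) (k := n) (by omega) (h ▸ hxP))
    (fun h => hgp.v_notMem_P (j := j + 1) (k := n) (by omega) (h ▸ hxP)) hx
  exact ⟨H.edge_subset_disk hjk hx, (hhj.disjoint_intEdge_side hjk).notMem_of_mem_left hxj⟩

end Hexagon

theorem stmt10_general (H : Hexagon) (hgp : H.GeneralPosition) (hhj : H.HuhJeon)
    (L : Set E3) (hL : H.IsQuadrisecant L)
    (i : Fin 6) (hi : i ∈ ({0, 2, 4} : Set (Fin 6)))
    (a q p b : E3) (ha : a ∈ H.edge i ∩ L) (hq : q ∈ H.edge (i + 1) ∩ L)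
    (hp : p ∈ H.edge (i + 3) ∩ L) (hb : b ∈ H.edge (i + 4) ∩ L) :
    Sbtw ℝ b q p ∧ Sbtw ℝ q p a := by
  have hcol : Collinear ℝ L := hL.1.collinear
  have haq : a ≠ q := by
    rintro rfl
    exact hgp.v_notMem_of_isQuadrisecant hL hp hb (j := i + 1) (by omega) (by omega)
      (hgp.eq_v_of_mem_edge_of_mem_edge ha.1 hq.1 rfl ▸ ha.2)
  have hpb : p ≠ b := by
    rintro rfl
    exact hgp.v_notMem_of_isQuadrisecant hL ha hq (j := i + 4) (by omega) (by omega)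
      (hgp.eq_v_of_mem_edge_of_mem_edge hp.1 hb.1 (by omega) ▸ hp.2)
  have hL₁ : L ⊆ H.P (i + 1) := hcol.subset_of_mem_affineSubspace ha.2 hq.2 haq
    (H.edge_subset_P (by omega) ha.1) (H.edge_subset_P (by omega) hq.1)
  have hL₄ : L ⊆ H.P (i + 4) := hcol.subset_of_mem_affineSubspace hp.2 hb.2 hpb
    (H.edge_subset_P (by omega) hp.1) (H.edge_subset_P (by omega) hb.1)
  obtain ⟨hq₄, hp₁⟩ := hhj.nonempty_intEdge_inter hi
  constructor
  · exact (convex_convexHull ℝ _).sbtw_of_mem_intrinsicInterior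
      (hcol.subset (by simp [insert_subset_iff, hb.2, hq.2, hp.2]))
      (hgp.mem_disk_diff_intrinsicInterior hhj (by omega) (by omega) hb.1 (hL₁ hb.2))
      (H.mem_intrinsicInterior_disk_of_nonempty hq₄ (hgp.v_notMem_P (by omega)) hq.1 (hL₄ hq.2))
      (hgp.mem_disk_diff_intrinsicInterior hhj (by omega) (by omega) hp.1 (hL₁ hp.2)) hpb.symm
  · exact (convex_convexHull ℝ _).sbtw_of_mem_intrinsicInterior
      (hcol.subset (by simp [insert_subset_iff, hq.2, hp.2, ha.2]))
      (hgp.mem_disk_diff_intrinsicInterior hhj (by omega) (by omega) hq.1 (hL₄ hq.2))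
      (H.mem_intrinsicInterior_disk_of_nonempty hp₁ (hgp.v_notMem_P (by omega)) hp.1 (hL₁ hp.2))
      (hgp.mem_disk_diff_intrinsicInterior hhj (by omega) (by omega) ha.1 (hL₄ ha.2)) haq.symm

/-- All three quadrisecants of a hexagonal trefoil knot are alternating: for
the quadrisecant meeting edges `e12, e23, e45, e56` (and its relabelings under the cyclic
symmetry `i ↦ i+2` of the Huh–Jeon pattern) at points `a, q, p, b` respectively, the order
of the points along the line is `b, q, p, a` (up to reversal). -/
theorem stmt10 (H : Hexagon) (hgp : H.GeneralPosition) (hhj : H.HuhJeon)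
    (htre : IsTrefoil H.K) (L : Set E3) (hL : H.IsQuadrisecant L)
    (i : Fin 6) (hi : i ∈ ({0, 2, 4} : Set (Fin 6)))
    (a q p b : E3) (ha : a ∈ H.edge i ∩ L) (hq : q ∈ H.edge (i + 1) ∩ L)
    (hp : p ∈ H.edge (i + 3) ∩ L) (hb : b ∈ H.edge (i + 4) ∩ L) :
    Sbtw ℝ b q p ∧ Sbtw ℝ q p a :=
  stmt10_general H hgp hhj L hL i hi a q p b ha hq hp hb
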